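/- Let c, D > 0, let δ ∈ (0, c/(2D)) with κ = √(1 − 4D²δ²/c²), and let G be a finite Borel measure on [0,∞) with G([0,δ]) = 0. Then for every t ≥ 0 and every L ∈ ℕ, Σ_{l=L}^∞ (2l+1)·C_l(t,t) ≤ (1 + 1/κ)²·exp(−2Dδ²t)·Σ_{l=L}^∞ (2l+1)·C_l. (Equivalently, the L²(Ω×S²) error of the degree-L truncated approximation to the spherical hyperbolic diffusion field decays at the exponential rate exp(−Dδ²t): ‖T_H(·,t) − T_{H,L}(·,t)‖ ≤ (1/(2√π))·(1+1/κ)·exp(−Dδ²t)·(Σ_{l=L}^∞(2l+1)C_l)^{1/2}.) -/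

import Mathlib

open MeasureTheory Real Set

/-- `H̃₁(μ,t)` for the subcritical regime `0 ≤ μ < c/(2D)`. -/
noncomputable def Htilde1 (c D μ t : ℝ) : ℝ :=
  Real.exp (-(c ^ 2 * t) / (2 * D)) *
    (Real.cosh (c * t * Real.sqrt (c ^ 2 / (4 * D ^ 2) - μ ^ 2)) +
      c / (2 * D * Real.sqrt (c ^ 2 / (4 * D ^ 2) - μ ^ 2)) *
        Real.sinh (c * t * Real.sqrt (c ^ 2 / (4 * D ^ 2) - μ ^ 2)))

/-- `H̃₂(μ,t)` for the supercritical regime `μ > c/(2D)`. -/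
noncomputable def Htilde2 (c D μ t : ℝ) : ℝ :=
  Real.exp (-(c ^ 2 * t) / (2 * D)) *
    (Real.cos (c * t * Real.sqrt (μ ^ 2 - c ^ 2 / (4 * D ^ 2))) +
      c / (2 * D * Real.sqrt (μ ^ 2 - c ^ 2 / (4 * D ^ 2))) *
        Real.sin (c * t * Real.sqrt (μ ^ 2 - c ^ 2 / (4 * D ^ 2))))

/-- `H̃(μ,t)`, pieced together from `H̃₁`, the value at `μ = c/(2D)`, and `H̃₂`. -/
noncomputable def Htilde (c D μ t : ℝ) : ℝ :=
  if μ < c / (2 * D) then Htilde1 c D μ t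
  else if μ = c / (2 * D) then Real.exp (-(c ^ 2 * t) / (2 * D)) * (1 + c ^ 2 * t / (2 * D))
  else Htilde2 c D μ t

/-- Bessel function of the first kind of real order `ν`, via its power series
(with real powers; for `ν > 0` this gives `besselJ ν 0 = 0`). -/
noncomputable def besselJ (ν x : ℝ) : ℝ :=
  ∑' n : ℕ, ((-1 : ℝ) ^ n / (n.factorial * Real.Gamma ((n : ℝ) + ν + 1))) *
    (x / 2) ^ (2 * (n : ℝ) + ν)

/-- The integrand `J_{l+1/2}(μ)² / μ`, with its value at `μ = 0` defined by
continuous extension (`2/π` for `l = 0`, `0` for `l ≥ 1`). -/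
noncomputable def besselInt (l : ℕ) (μ : ℝ) : ℝ :=
  if μ = 0 then (if l = 0 then 2 / Real.pi else 0)
  else besselJ ((l : ℝ) + 1 / 2) μ ^ 2 / μ

/-- Angular power spectrum `C_l(t,t')` of the spherical hyperbolic diffusion field. -/
noncomputable def Cl (c D : ℝ) (G : MeasureTheory.Measure ℝ) (l : ℕ) (t t' : ℝ) : ℝ :=
  2 * Real.pi ^ 2 * ∫ μ in Set.Ici (0 : ℝ), besselInt l μ * Htilde c D μ t * Htilde c D μ t' ∂G

/-!
Each term of the tail is bounded separately: `C_l(t,t) ≤ 4 e^{-2Dδ²t} C_l`, and `4 ≤ (1 + 1/κ)²`.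
Since `G` lives on `μ > δ`, this follows from `|H̃(μ,t)| ≤ 2 e^{-Dδ²t}` for `μ ≥ δ`. Writing
`H̃ = e^{-st} h` with `s = c²/(2D)` and `A = s - Dδ²`, one has `s ≤ 2A`, and `|h(t)| ≤ 2 e^{At}`
in each regime; in the overdamped one because the rate `c√(c²/(4D²) - μ²)` is at most `A`, so
that `2 e^{At} - h(t)` is nondecreasing. Integrability of `J_{l+1/2}(μ)²/μ` on `[δ, ∞)` comes from
`|J_{l±1/2}(x)| ≤ C/√x`, proved by induction on `l` from the closed forms of `J_{±1/2}` and the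
three-term recurrence.
-/

noncomputable def besselJTerm (ν x : ℝ) (n : ℕ) : ℝ :=
  ((-1 : ℝ) ^ n / (n.factorial * Gamma ((n : ℝ) + ν + 1))) * (x / 2) ^ (2 * (n : ℝ) + ν)

lemma besselJ_eq_tsum (ν x : ℝ) : besselJ ν x = ∑' n, besselJTerm ν x n := rfl

lemma nat_add_add_one_pos {ν : ℝ} (hν : -1 < ν) (n : ℕ) : (0 : ℝ) < n + ν + 1 := by
  linarith [n.cast_nonneg (α := ℝ)]

lemma besselJTerm_succ {ν x : ℝ} (hν : -1 < ν) (hx : 0 < x) (n : ℕ) :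
    besselJTerm ν x (n + 1) =
      -(besselJTerm ν x n * ((x / 2) ^ 2 / ((n + 1) * (n + ν + 1)))) := by
  have hn := nat_add_add_one_pos hν n
  have hΓ : Gamma ((n + 1 : ℕ) + ν + 1) = (n + ν + 1) * Gamma (n + ν + 1) := by
    rw [← Gamma_add_one hn.ne']; push_cast; ring_nf
  have hpow :
      (x / 2) ^ (2 * ((n + 1 : ℕ) : ℝ) + ν) = (x / 2) ^ (2 * (n : ℝ) + ν) * (x / 2) ^ 2 := by
    rw [← rpow_natCast, ← rpow_add (by positivity)]; push_cast; ring_nf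
  have := Gamma_pos_of_pos hn
  rw [besselJTerm, besselJTerm, hΓ, hpow, Nat.factorial_succ]
  push_cast
  field_simp
  ring

lemma summable_besselJTerm {ν x : ℝ} (hν : -1 < ν) (hx : 0 < x) : Summable (besselJTerm ν x) := by
  refine summable_of_ratio_norm_eventually_le (r := 1 / 2) (by norm_num) ?_
  filter_upwards [Filter.eventually_ge_atTop ⌈(x / 2) ^ 2 * 2⌉₊] with n hn
  have hn' : (x / 2) ^ 2 * 2 ≤ n := Nat.ceil_le.mp hn
  have hpos : (0 : ℝ) < (n + 1) * (n + ν + 1) := by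
    have := nat_add_add_one_pos hν n; positivity
  have hratio : (x / 2) ^ 2 / ((n + 1) * (n + ν + 1)) ≤ 1 / 2 := by
    rw [div_le_iff₀ hpos]; nlinarith [nat_add_add_one_pos hν n]
  rw [besselJTerm_succ hν hx, norm_neg, norm_mul, mul_comm,
    norm_of_nonneg (div_nonneg (sq_nonneg _) hpos.le)]
  gcongr

lemma Gamma_nat_add_half_eq_factorial (n : ℕ) :
    Gamma (n + 1 / 2) = √π * (2 * n).factorial / (4 ^ n * n.factorial) := by
  induction n with
  | zero => norm_num [Gamma_one_half_eq]
  | succ n ih =>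
    have h : (0 : ℝ) < n + 1 / 2 := by positivity
    rw [Nat.cast_succ, add_right_comm, Gamma_add_one h.ne', ih,
      show 2 * (n + 1) = 2 * n + 1 + 1 by ring, Nat.factorial_succ, Nat.factorial_succ,
      Nat.factorial_succ]
    push_cast
    field_simp
    ring

lemma rpow_two_mul_nat_add {x : ℝ} (hx : 0 < x) (n : ℕ) (s : ℝ) :
    (x / 2) ^ (2 * (n : ℝ) + s) = x ^ (2 * n) / 4 ^ n * (x / 2) ^ s := by
  rw [rpow_add (by positivity), show 2 * (n : ℝ) = ((2 * n : ℕ) : ℝ) by push_cast; ring,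
    rpow_natCast, div_pow, pow_mul, pow_mul 2]
  norm_num

lemma besselJTerm_neg_half {x : ℝ} (hx : 0 < x) (n : ℕ) :
    besselJTerm (-(1 / 2)) x n =
      (x / 2) ^ (-(1 / 2) : ℝ) / √π * ((-1) ^ n * x ^ (2 * n) / (2 * n).factorial) := by
  rw [besselJTerm, show (n : ℝ) + -(1 / 2) + 1 = n + 1 / 2 by ring,
    Gamma_nat_add_half_eq_factorial, rpow_two_mul_nat_add hx]
  field_simp

lemma besselJTerm_half {x : ℝ} (hx : 0 < x) (n : ℕ) :
    besselJTerm (1 / 2) x n =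
      (x / 2) ^ (-(1 / 2) : ℝ) / √π * ((-1) ^ n * x ^ (2 * n + 1) / (2 * n + 1).factorial) := by
  have hsplit : (x / 2) ^ (1 / 2 : ℝ) = x / 2 * (x / 2) ^ (-(1 / 2) : ℝ) := by
    rw [← rpow_one_add' (by positivity) (by norm_num)]; norm_num
  rw [besselJTerm, show (n : ℝ) + 1 / 2 + 1 = (n + 1 : ℕ) + 1 / 2 by push_cast; ring,
    Gamma_nat_add_half_eq_factorial, rpow_two_mul_nat_add hx, hsplit,
    show 2 * (n + 1) = 2 * n + 1 + 1 by ring, Nat.factorial_succ, Nat.factorial_succ,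
    Nat.factorial_succ n]
  push_cast
  field_simp
  ring

lemma besselJ_neg_half {x : ℝ} (hx : 0 < x) :
    besselJ (-(1 / 2)) x = (x / 2) ^ (-(1 / 2) : ℝ) / √π * cos x := by
  rw [besselJ_eq_tsum, tsum_congr (besselJTerm_neg_half hx), tsum_mul_left, cos_eq_tsum]

lemma besselJ_half {x : ℝ} (hx : 0 < x) :
    besselJ (1 / 2) x = (x / 2) ^ (-(1 / 2) : ℝ) / √π * sin x := by
  rw [besselJ_eq_tsum, tsum_congr (besselJTerm_half hx), tsum_mul_left, sin_eq_tsum]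

lemma besselJTerm_recurrence_zero {ν x : ℝ} (hν : 0 < ν) (hx : 0 < x) :
    2 * ν / x * besselJTerm ν x 0 - besselJTerm (ν - 1) x 0 = 0 := by
  have hpow : (x / 2) ^ ν = (x / 2) ^ (ν - 1) * (x / 2) := by
    rw [← rpow_add_one (by positivity)]; ring_nf
  have := Gamma_pos_of_pos hν
  simp only [besselJTerm, Nat.cast_zero, mul_zero, zero_add, sub_add_cancel, pow_zero,
    Nat.factorial_zero, Nat.cast_one, one_mul, Gamma_add_one hν.ne', hpow]
  field_simp
  ring

lemma besselJTerm_recurrence_succ {ν x : ℝ} (hν : 0 < ν) (hx : 0 < x) (n : ℕ) :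
    2 * ν / x * besselJTerm ν x (n + 1) - besselJTerm (ν - 1) x (n + 1) =
      besselJTerm (ν + 1) x n := by
  have hn : (0 : ℝ) < n + ν + 1 := by positivity
  have hΓ₁ : Gamma ((n + 1 : ℕ) + ν + 1) = (n + ν + 1) * Gamma (n + ν + 1) := by
    rw [← Gamma_add_one hn.ne']; push_cast; ring_nf
  have hΓ₂ : Gamma ((n + 1 : ℕ) + (ν - 1) + 1) = Gamma (n + ν + 1) := by push_cast; ring_nf
  have hΓ₃ : Gamma (n + (ν + 1) + 1) = (n + ν + 1) * Gamma (n + ν + 1) := by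
    rw [← Gamma_add_one hn.ne']; ring_nf
  have hpow₁ :
      (x / 2) ^ (2 * ((n + 1 : ℕ) : ℝ) + ν) = (x / 2) ^ (2 * (n : ℝ) + (ν + 1)) * (x / 2) := by
    rw [← rpow_add_one (by positivity)]; push_cast; ring_nf
  have hpow₂ : (x / 2) ^ (2 * ((n + 1 : ℕ) : ℝ) + (ν - 1)) = (x / 2) ^ (2 * (n : ℝ) + (ν + 1)) := by
    push_cast; ring_nf
  have := Gamma_pos_of_pos hn
  simp only [besselJTerm, hΓ₁, hΓ₂, hΓ₃, hpow₁, hpow₂, Nat.factorial_succ, pow_succ]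
  push_cast
  field_simp
  ring

lemma besselJ_add_one {ν x : ℝ} (hν : 0 < ν) (hx : 0 < x) :
    besselJ (ν + 1) x = 2 * ν / x * besselJ ν x - besselJ (ν - 1) x := by
  have hJν := summable_besselJTerm (by linarith) hx (ν := ν)
  have hJν' := summable_besselJTerm (by linarith) hx (ν := ν - 1)
  rw [besselJ_eq_tsum, besselJ_eq_tsum, besselJ_eq_tsum, ← tsum_mul_left,
    ← (hJν.mul_left _).tsum_sub hJν', ((hJν.mul_left _).sub hJν').tsum_eq_zero_add,
    besselJTerm_recurrence_zero hν hx, zero_add]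
  exact tsum_congr fun n => (besselJTerm_recurrence_succ hν hx n).symm

lemma abs_besselJ_half_le {x : ℝ} (hx : 0 < x) :
    |besselJ (-(1 / 2)) x| ≤ √2 / √π / √x ∧ |besselJ (1 / 2) x| ≤ √2 / √π / √x := by
  have hfactor : (x / 2) ^ (-(1 / 2) : ℝ) / √π = √2 / √π / √x := by
    rw [rpow_neg (by positivity), ← sqrt_eq_rpow, sqrt_div' _ (by norm_num : (0 : ℝ) ≤ 2)]
    field_simp
  have hbound : ∀ w : ℝ, |w| ≤ 1 → |(x / 2) ^ (-(1 / 2) : ℝ) / √π * w| ≤ √2 / √π / √x := by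
    intro w hw
    rw [abs_mul, hfactor, abs_of_nonneg (by positivity)]
    exact mul_le_of_le_one_right (by positivity) hw
  rw [besselJ_neg_half hx, besselJ_half hx]
  exact ⟨hbound _ (abs_cos_le_one x), hbound _ (abs_sin_le_one x)⟩

lemma exists_abs_besselJ_nat_add_half_le {δ : ℝ} (hδ : 0 < δ) (l : ℕ) :
    ∃ C, ∀ x, δ ≤ x →
      |besselJ (l - 1 / 2) x| ≤ C / √x ∧ |besselJ (l + 1 / 2) x| ≤ C / √x := by
  induction l with
  | zero =>
    refine ⟨√2 / √π, fun x hx => ?_⟩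
    rw [Nat.cast_zero, zero_sub, zero_add]
    exact abs_besselJ_half_le (hδ.trans_le hx)
  | succ l ih =>
    obtain ⟨C, hC⟩ := ih
    refine ⟨(2 * l + 1) / δ * |C| + |C|, fun x hx => ?_⟩
    have hx0 : 0 < x := hδ.trans_le hx
    obtain ⟨hprev, hcur⟩ := hC x hx
    have hC' : C / √x ≤ |C| / √x := by gcongr; exact le_abs_self C
    have hcoef : 2 * (l + 1 / 2) / x ≤ (2 * l + 1) / δ := by
      rw [show 2 * ((l : ℝ) + 1 / 2) = 2 * l + 1 by ring]; gcongr
    push_cast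
    rw [show (l : ℝ) + 1 - 1 / 2 = l + 1 / 2 by ring,
      show (l : ℝ) + 1 + 1 / 2 = (l + 1 / 2) + 1 by ring,
      besselJ_add_one (by positivity) hx0, show (l : ℝ) + 1 / 2 - 1 = l - 1 / 2 by ring]
    constructor
    · calc |besselJ (l + 1 / 2) x| ≤ |C| / √x := hcur.trans hC'
        _ ≤ _ := by gcongr; exact le_add_of_nonneg_left (by positivity)
    · calc |2 * (l + 1 / 2) / x * besselJ (l + 1 / 2) x - besselJ (l - 1 / 2) x|
          ≤ 2 * (l + 1 / 2) / x * |besselJ (l + 1 / 2) x| + |besselJ (l - 1 / 2) x| := by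
            refine (abs_sub _ _).trans_eq ?_
            rw [abs_mul, abs_of_nonneg (by positivity)]
        _ ≤ (2 * l + 1) / δ * (|C| / √x) + |C| / √x := by
            gcongr
            exacts [hcur.trans hC', hprev.trans hC']
        _ = ((2 * l + 1) / δ * |C| + |C|) / √x := by ring

lemma measurable_besselJ (ν : ℝ) : Measurable (besselJ ν) :=
  Measurable.tsum fun n => by fun_prop

lemma measurable_besselInt (l : ℕ) : Measurable (besselInt l) :=
  Measurable.ite (measurableSet_singleton 0) measurable_const
    (((measurable_besselJ _).pow_const 2).div measurable_id)

lemma besselInt_nonneg (l : ℕ) {μ : ℝ} (hμ : 0 ≤ μ) : 0 ≤ besselInt l μ := by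
  unfold besselInt
  split_ifs <;> positivity

lemma exists_besselInt_le {δ : ℝ} (hδ : 0 < δ) (l : ℕ) :
    ∃ B, ∀ μ, δ ≤ μ → besselInt l μ ≤ B := by
  obtain ⟨C, hC⟩ := exists_abs_besselJ_nat_add_half_le hδ l
  refine ⟨C ^ 2 / δ ^ 2, fun μ hμ => ?_⟩
  have hμ0 : 0 < μ := hδ.trans_le hμ
  have hsq : besselJ (l + 1 / 2) μ ^ 2 ≤ C ^ 2 / μ := by
    calc besselJ (l + 1 / 2) μ ^ 2 = |besselJ (l + 1 / 2) μ| ^ 2 := (sq_abs _).symm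
      _ ≤ (C / √μ) ^ 2 := pow_le_pow_left₀ (abs_nonneg _) (hC μ hμ).2 2
      _ = C ^ 2 / μ := by rw [div_pow, sq_sqrt hμ0.le]
  rw [besselInt, if_neg hμ0.ne']
  calc besselJ (l + 1 / 2) μ ^ 2 / μ ≤ C ^ 2 / μ / μ := by gcongr
    _ = C ^ 2 / μ ^ 2 := by rw [div_div, ← sq]
    _ ≤ C ^ 2 / δ ^ 2 := by gcongr

lemma Htilde_time_zero (c D μ : ℝ) : Htilde c D μ 0 = 1 := by
  unfold Htilde Htilde1 Htilde2
  split_ifs <;> simp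

lemma one_add_mul_le_two_mul_exp {s A t : ℝ} (hsA : s ≤ 2 * A) (ht : 0 ≤ t) :
    1 + s * t ≤ 2 * exp (A * t) := by
  nlinarith [add_one_le_exp (A * t), mul_le_mul_of_nonneg_right hsA ht]

lemma abs_cos_add_mul_sin_le {r y : ℝ} (hr : 0 ≤ r) (hy : 0 ≤ y) :
    |cos y + r * sin y| ≤ 1 + r * y := by
  have hsin : |sin y| ≤ y := abs_sin_le_abs.trans_eq (abs_of_nonneg hy)
  calc |cos y + r * sin y| ≤ |cos y| + |r * sin y| := abs_add_le _ _
    _ = |cos y| + r * |sin y| := by rw [abs_mul, abs_of_nonneg hr]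
    _ ≤ 1 + r * y := by gcongr; exact abs_cos_le_one y

lemma cosh_add_mul_sinh_le_two_mul_exp {a r A t : ℝ} (ha : 0 ≤ a) (haA : a ≤ A)
    (hra : r * a ≤ 2 * A) (ht : 0 ≤ t) :
    cosh (a * t) + r * sinh (a * t) ≤ 2 * exp (A * t) := by
  set g : ℝ → ℝ := fun t => 2 * exp (A * t) - cosh (a * t) - r * sinh (a * t)
  have hderiv (t : ℝ) : HasDerivAt g
      (2 * (exp (A * t) * A) - sinh (a * t) * a - r * (cosh (a * t) * a)) t := by
    have hlin (k : ℝ) : HasDerivAt (fun t => k * t) k t := by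
      simpa using (hasDerivAt_id t).const_mul k
    exact (((hlin A).exp.const_mul 2).sub (hlin a).cosh).sub ((hlin a).sinh.const_mul r)
  have hderiv_nonneg (t : ℝ) (ht : 0 ≤ t) :
      0 ≤ 2 * (exp (A * t) * A) - sinh (a * t) * a - r * (cosh (a * t) * a) := by
    have hsinh : 0 ≤ sinh (a * t) := sinh_nonneg_iff.mpr (by positivity)
    have hexp : exp (a * t) ≤ exp (A * t) := exp_le_exp.mpr (by nlinarith)
    have hA : 0 ≤ A := ha.trans haA
    nlinarith [cosh_add_sinh (a * t), cosh_pos (a * t), mul_le_mul_of_nonneg_right haA hsinh,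
      mul_le_mul_of_nonneg_right hra (cosh_pos (a * t)).le, mul_le_mul_of_nonneg_left hexp hA]
  have hmono : MonotoneOn g (Ici 0) := by
    refine monotoneOn_of_hasDerivWithinAt_nonneg (convex_Ici 0)
      (fun t _ => (hderiv t).continuousAt.continuousWithinAt)
      (fun t _ => (hderiv t).hasDerivWithinAt) fun t ht => hderiv_nonneg t ?_
    rw [interior_Ici] at ht; exact le_of_lt ht
  have := hmono self_mem_Ici ht ht
  simp only [g, mul_zero, exp_zero, cosh_zero, sinh_zero] at this
  linarith

lemma sqrt_sq_sub_sq_le {β δ μ : ℝ} (hβ : 0 < β) (hδ : 0 ≤ δ) (hδβ : δ ≤ β) (hμ : δ ≤ μ) :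
    √(β ^ 2 - μ ^ 2) ≤ β - δ ^ 2 / (2 * β) := by
  have hδμ : δ ^ 2 ≤ μ ^ 2 := pow_le_pow_left₀ hδ hμ 2
  rw [sqrt_le_iff]
  constructor
  · rw [sub_nonneg, div_le_iff₀ (by positivity)]; nlinarith
  · have : (β - δ ^ 2 / (2 * β)) ^ 2 = β ^ 2 - δ ^ 2 + (δ ^ 2 / (2 * β)) ^ 2 := by
      field_simp; ring
    nlinarith [sq_nonneg (δ ^ 2 / (2 * β))]

lemma abs_exp_neg_mul_le {c D δ t X : ℝ} (hD : 0 < D)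
    (hX : |X| ≤ 2 * exp ((c ^ 2 / (2 * D) - D * δ ^ 2) * t)) :
    |exp (-(c ^ 2 * t) / (2 * D)) * X| ≤ 2 * exp (-(D * δ ^ 2 * t)) := by
  rw [abs_mul, abs_of_pos (exp_pos _)]
  calc exp (-(c ^ 2 * t) / (2 * D)) * |X|
      ≤ exp (-(c ^ 2 * t) / (2 * D)) * (2 * exp ((c ^ 2 / (2 * D) - D * δ ^ 2) * t)) := by gcongr
    _ = 2 * exp (-(D * δ ^ 2 * t)) := by
      rw [mul_left_comm, ← exp_add]; congr 2; field_simp; ring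

lemma abs_Htilde_le {c D δ μ t : ℝ} (hc : 0 < c) (hD : 0 < D) (hδ : 0 ≤ δ)
    (hδβ : δ ≤ c / (2 * D)) (hμ : δ ≤ μ) (ht : 0 ≤ t) :
    |Htilde c D μ t| ≤ 2 * exp (-(D * δ ^ 2 * t)) := by
  set A := c ^ 2 / (2 * D) - D * δ ^ 2
  have hβsq : c ^ 2 / (4 * D ^ 2) = (c / (2 * D)) ^ 2 := by ring
  have hsA : c ^ 2 / (2 * D) ≤ 2 * A := by
    have h : δ ^ 2 ≤ c ^ 2 / (4 * D ^ 2) := hβsq ▸ pow_le_pow_left₀ hδ hδβ 2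
    rw [le_div_iff₀ (by positivity)] at h
    simp only [A]; field_simp; nlinarith
  unfold Htilde
  split_ifs with hsub hcrit
  · set x := √(c ^ 2 / (4 * D ^ 2) - μ ^ 2)
    have hx : 0 < x := sqrt_pos.mpr (by
      rw [hβsq, sub_pos]; exact pow_lt_pow_left₀ hsub (by linarith) two_ne_zero)
    have hxA : c * x ≤ A := by
      calc c * x ≤ c * (c / (2 * D) - δ ^ 2 / (2 * (c / (2 * D)))) := by
            gcongr; simp only [x, hβsq]; exact sqrt_sq_sub_sq_le (by positivity) hδ hδβ hμ
        _ = A := by simp only [A]; field_simp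
    refine abs_exp_neg_mul_le hD ?_
    rw [abs_of_nonneg (by positivity), mul_right_comm c t x]
    refine cosh_add_mul_sinh_le_two_mul_exp (by positivity) hxA ?_ ht
    calc c / (2 * D * x) * (c * x) = c ^ 2 / (2 * D) := by field_simp
      _ ≤ 2 * A := hsA
  · refine abs_exp_neg_mul_le hD ?_
    rw [abs_of_nonneg (by positivity), mul_div_right_comm]
    exact one_add_mul_le_two_mul_exp hsA ht
  · set x := √(μ ^ 2 - c ^ 2 / (4 * D ^ 2))
    have hx : 0 < x := sqrt_pos.mpr (by
      rw [hβsq, sub_pos]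
      exact pow_lt_pow_left₀ (lt_of_le_of_ne (not_lt.mp hsub) (Ne.symm hcrit)) (by positivity)
        two_ne_zero)
    refine abs_exp_neg_mul_le hD ((abs_cos_add_mul_sin_le (by positivity) (by positivity)).trans ?_)
    calc 1 + c / (2 * D * x) * (c * t * x) = 1 + c ^ 2 / (2 * D) * t := by field_simp
      _ ≤ 2 * exp (A * t) := one_add_mul_le_two_mul_exp hsA ht

lemma integral_mul_mul_self_le {α : Type*} [MeasurableSpace α] {ν : Measure α} {f g : α → ℝ}
    {b : ℝ} (hf : Integrable f ν) (hf0 : 0 ≤ᵐ[ν] f) (hg : ∀ᵐ x ∂ν, |g x| ≤ b) :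
    ∫ x, f x * g x * g x ∂ν ≤ b ^ 2 * ∫ x, f x ∂ν := by
  rw [← integral_const_mul]
  refine integral_mono_of_nonneg ?_ (hf.const_mul _) ?_
  · filter_upwards [hf0] with x hx
    rw [mul_assoc]; exact mul_nonneg hx (mul_self_nonneg _)
  · filter_upwards [hf0, hg] with x hx hgx
    have : g x * g x ≤ b ^ 2 := by
      rw [← abs_mul_abs_self, ← sq]; exact pow_le_pow_left₀ (abs_nonneg _) hgx 2
    rw [mul_assoc, mul_comm (b ^ 2)]
    exact mul_le_mul_of_nonneg_left this hx

lemma Cl_zero_zero (c D : ℝ) (G : Measure ℝ) (l : ℕ) :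
    Cl c D G l 0 0 = 2 * π ^ 2 * ∫ μ in Ici 0, besselInt l μ ∂G := by
  simp only [Cl, Htilde_time_zero, mul_one]

lemma Cl_zero_zero_nonneg (c D : ℝ) (G : Measure ℝ) (l : ℕ) : 0 ≤ Cl c D G l 0 0 := by
  rw [Cl_zero_zero]
  exact mul_nonneg (by positivity)
    (setIntegral_nonneg measurableSet_Ici fun μ hμ => besselInt_nonneg l hμ)

lemma Cl_diag_le {c D δ t : ℝ} (hc : 0 < c) (hD : 0 < D) (hδ : 0 < δ) (hδβ : δ ≤ c / (2 * D))
    (G : Measure ℝ) [IsFiniteMeasure G] (hG : G (Icc 0 δ) = 0) (l : ℕ) (ht : 0 ≤ t) :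
    Cl c D G l t t ≤ 4 * exp (-(2 * D * δ ^ 2 * t)) * Cl c D G l 0 0 := by
  have hδμ : ∀ᵐ μ ∂G.restrict (Ici 0), δ < μ := by
    rw [ae_restrict_iff' measurableSet_Ici]
    filter_upwards [measure_eq_zero_iff_ae_notMem.mp hG] with μ hμ hμ0
    exact lt_of_not_ge fun h => hμ ⟨hμ0, h⟩
  obtain ⟨B, hB⟩ := exists_besselInt_le hδ l
  have hint : Integrable (besselInt l) (G.restrict (Ici 0)) := by
    refine .of_bound (measurable_besselInt l).aestronglyMeasurable B ?_
    filter_upwards [hδμ] with μ hμ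
    rw [norm_of_nonneg (besselInt_nonneg l (hδ.trans hμ).le)]
    exact hB μ hμ.le
  have hbound := integral_mul_mul_self_le hint
    (by filter_upwards [hδμ] with μ hμ using besselInt_nonneg l (hδ.trans hμ).le)
    (by filter_upwards [hδμ] with μ hμ using abs_Htilde_le hc hD hδ.le hδβ hμ.le ht)
  have hsq : (2 * exp (-(D * δ ^ 2 * t))) ^ 2 = 4 * exp (-(2 * D * δ ^ 2 * t)) := by
    rw [mul_pow, ← exp_nat_mul]; ring_nf
  rw [Cl, Cl_zero_zero, ← hsq, mul_left_comm]
  gcongr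

lemma four_le_one_add_inv_sq {κ : ℝ} (hκ0 : 0 < κ) (hκ1 : κ ≤ 1) : 4 ≤ (1 + 1 / κ) ^ 2 := by
  have : 1 ≤ 1 / κ := by rwa [le_div_iff₀ hκ0, one_mul]
  nlinarith

theorem truncation_tail_exponential_decay_general
    (c D δ κ : ℝ) (hc : 0 < c) (hD : 0 < D) (hδ0 : 0 < δ) (hδ : δ < c / (2 * D))
    (hκ : κ = Real.sqrt (1 - 4 * D ^ 2 * δ ^ 2 / c ^ 2))
    (G : MeasureTheory.Measure ℝ) [MeasureTheory.IsFiniteMeasure G]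
    (hsupp : G (Set.Icc 0 δ) = 0) :
    ∀ t : ℝ, 0 ≤ t → ∀ L : ℕ,
      ∑' l : ℕ, ENNReal.ofReal ((2 * ((L + l : ℕ) : ℝ) + 1) * Cl c D G (L + l) t t)
        ≤ ENNReal.ofReal ((1 + 1 / κ) ^ 2 * Real.exp (-(2 * D * δ ^ 2 * t))) *
          ∑' l : ℕ, ENNReal.ofReal ((2 * ((L + l : ℕ) : ℝ) + 1) * Cl c D G (L + l) 0 0) := by
  intro t ht L
  have hκ0 : 0 < κ := by
    rw [hκ, sqrt_pos, sub_pos, div_lt_one (by positivity)]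
    rw [lt_div_iff₀ (by positivity)] at hδ
    nlinarith [mul_self_lt_mul_self (by positivity) hδ]
  have hκ1 : κ ≤ 1 :=
    hκ ▸ sqrt_le_one.mpr (by linarith [show 0 ≤ 4 * D ^ 2 * δ ^ 2 / c ^ 2 by positivity])
  rw [← ENNReal.tsum_mul_left]
  refine ENNReal.tsum_le_tsum fun l => ?_
  rw [← ENNReal.ofReal_mul (by positivity)]
  refine ENNReal.ofReal_le_ofReal ?_
  calc (2 * ((L + l : ℕ) : ℝ) + 1) * Cl c D G (L + l) t t
      ≤ (2 * ((L + l : ℕ) : ℝ) + 1) * (4 * exp (-(2 * D * δ ^ 2 * t)) * Cl c D G (L + l) 0 0) := by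
        gcongr; exact Cl_diag_le hc hD hδ0 hδ.le G hsupp (L + l) ht
    _ ≤ (2 * ((L + l : ℕ) : ℝ) + 1) *
          ((1 + 1 / κ) ^ 2 * exp (-(2 * D * δ ^ 2 * t)) * Cl c D G (L + l) 0 0) := by
        have := Cl_zero_zero_nonneg c D G (L + l)
        gcongr; exact four_le_one_add_inv_sq hκ0 hκ1
    _ = _ := by ring

/-- If `G([0,δ]) = 0` for some `δ ∈ (0, c/(2D))`, with
`κ = √(1 − 4D²δ²/c²)`, then the tail sums of the angular power spectrum decay
exponentially in time:
`Σ_{l≥L}(2l+1)C_l(t,t) ≤ (1+1/κ)²·exp(−2Dδ²t)·Σ_{l≥L}(2l+1)C_l`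
(stated in `ℝ≥0∞` so that possibly divergent tails are covered). -/
theorem truncation_tail_exponential_decay
    (c D δ κ : ℝ) (hc : 0 < c) (hD : 0 < D) (hδ0 : 0 < δ) (hδ : δ < c / (2 * D))
    (hκ : κ = Real.sqrt (1 - 4 * D ^ 2 * δ ^ 2 / c ^ 2))
    (G : MeasureTheory.Measure ℝ) [MeasureTheory.IsFiniteMeasure G]
    (hG0 : G (Set.Iio 0) = 0) (hsupp : G (Set.Icc 0 δ) = 0) :
    ∀ t : ℝ, 0 ≤ t → ∀ L : ℕ,
      ∑' l : ℕ, ENNReal.ofReal ((2 * ((L + l : ℕ) : ℝ) + 1) * Cl c D G (L + l) t t)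
        ≤ ENNReal.ofReal ((1 + 1 / κ) ^ 2 * Real.exp (-(2 * D * δ ^ 2 * t))) *
          ∑' l : ℕ, ENNReal.ofReal ((2 * ((L + l : ℕ) : ℝ) + 1) * Cl c D G (L + l) 0 0) :=
  truncation_tail_exponential_decay_general c D δ κ hc hD hδ0 hδ hκ G hsupp
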